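/- Let Σ be an alphabet containing two distinct symbols a and b. The language Σ*b of strings ending with b is not PTL-definable, whereas the language bΣ* of strings beginning with b is PTL-definable. -/

import Mathlib

/-- PTL formulas over alphabet `α`: atoms, conjunction, negation, and the past operator. -/
inductive PTL (α : Type*) : Type _
  | atom : α → PTL α
  | conj : PTL α → PTL α → PTL α
  | neg : PTL α → PTL α
  | past : PTL α → PTL α

/-- Satisfaction of a PTL formula in string `w` at (1-based) position `n ∈ {1,…,N+1}`. -/
def PTL.Sat {α : Type*} (w : List α) : PTL α → ℕ → Prop
  | .atom a, n => 1 ≤ n ∧ w[n - 1]? = some a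
  | .conj ψ₁ ψ₂, n => PTL.Sat w ψ₁ n ∧ PTL.Sat w ψ₂ n
  | .neg ψ, n => ¬ PTL.Sat w ψ n
  | .past ψ, n => ∃ m, 1 ≤ m ∧ m < n ∧ PTL.Sat w ψ m

/-- A string `w` of length `N` satisfies `ψ` iff `w, N+1 ⊨ ψ`. -/
def PTL.Models {α : Type*} (w : List α) (ψ : PTL α) : Prop :=
  PTL.Sat w ψ (w.length + 1)

/-- A language is PTL-definable if it is the set of strings satisfying some PTL formula. -/
def PTLDefinable {α : Type*} (L : Set (List α)) : Prop :=
  ∃ ψ : PTL α, ∀ w : List α, w ∈ L ↔ PTL.Models w ψ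

/-!
A formula of past-depth `d` cannot tell position `m` from `m + 2` in a word of period 2 once
`m > 2d`. So in `(ab)ᵏa` with `k > d` the final `a` looks, to every subformula, like the `a`
two places earlier, and `(ab)ᵏ`, `(ab)ᵏa` satisfy the same formulas of depth `≤ d`, although
only the first ends with `b`. The language `bΣ*` is defined by `P (π_b ∧ ¬ P ⊤)`: the letter at
the only position without a predecessor is `b`.
-/

section AlternatingWord

variable {α : Type*}

def alternatingWord (a b : α) (n : ℕ) : List α :=
  (List.range n).map fun i => if i % 2 = 0 then a else b

@[simp]
theorem length_alternatingWord (a b : α) (n : ℕ) : (alternatingWord a b n).length = n := by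
  simp [alternatingWord]

theorem alternatingWord_succ (a b : α) (n : ℕ) :
    alternatingWord a b (n + 1) = alternatingWord a b n ++ [if n % 2 = 0 then a else b] := by
  simp [alternatingWord, List.range_succ]

theorem getElem?_alternatingWord_add_two (a b : α) {n i : ℕ}
    (hi : i + 2 < (alternatingWord a b n).length) :
    (alternatingWord a b n)[i + 2]? = (alternatingWord a b n)[i]? := by
  simp only [length_alternatingWord] at hi
  simp [alternatingWord, hi, show i < n by omega]

end AlternatingWord

namespace PTL

variable {α : Type*}

def pastDepth : PTL α → ℕ
  | .atom _ => 0
  | .conj φ χ => max φ.pastDepth χ.pastDepth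
  | .neg φ => φ.pastDepth
  | .past φ => φ.pastDepth + 1

theorem sat_append_iff_of_le {w v : List α} (ψ : PTL α) {m : ℕ} (hm : m ≤ w.length) :
    Sat (w ++ v) ψ m ↔ Sat w ψ m := by
  induction ψ generalizing m with
  | atom c =>
    simp only [Sat]
    constructor <;> rintro ⟨h1, h2⟩ <;> refine ⟨h1, ?_⟩
    · rwa [List.getElem?_append_left (by omega)] at h2
    · rwa [List.getElem?_append_left (by omega)]
  | conj φ χ ihφ ihχ => simp only [Sat, ihφ hm, ihχ hm]
  | neg φ ih => simp only [Sat, ih hm]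
  | past φ ih =>
    simp only [Sat]
    exact exists_congr fun m' => and_congr_right fun _ =>
      and_congr_right fun hm' => ih (by omega)

theorem sat_add_period_iff {w : List α} {p : ℕ}
    (hw : ∀ i, i + p < w.length → w[i + p]? = w[i]?) (ψ : PTL α) {m : ℕ}
    (hm : p * ψ.pastDepth + 1 ≤ m) (hmp : m + p ≤ w.length) :
    Sat w ψ (m + p) ↔ Sat w ψ m := by
  induction ψ generalizing m with
  | atom c =>
    simp only [pastDepth, mul_zero, zero_add] at hm
    simp only [Sat, show m + p - 1 = m - 1 + p by omega, hw (m - 1) (by omega)]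
    exact and_congr_left fun _ => by omega
  | conj φ χ ihφ ihχ =>
    simp only [pastDepth] at hm
    have hφ := Nat.mul_le_mul_left p (le_max_left φ.pastDepth χ.pastDepth)
    have hχ := Nat.mul_le_mul_left p (le_max_right φ.pastDepth χ.pastDepth)
    simp only [Sat, ihφ (by omega) hmp, ihχ (by omega) hmp]
  | neg φ ih => simp only [Sat, ih hm hmp]
  | past φ ih =>
    simp only [pastDepth, Nat.mul_succ] at hm
    simp only [Sat]
    constructor
    · rintro ⟨m', h1, h2, h3⟩
      by_cases hlt : m' < m
      · exact ⟨m', h1, hlt, h3⟩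
      · refine ⟨m' - p, by omega, by omega, ?_⟩
        rwa [← ih (by omega) (by omega), Nat.sub_add_cancel (by omega)]
    · rintro ⟨m', h1, h2, h3⟩
      exact ⟨m', h1, by omega, h3⟩

theorem models_append_singleton_iff {x : List α} {c : α} {d : ℕ}
    (hc : ∀ φ : PTL α, φ.pastDepth < d → Sat (x ++ [c]) φ (x.length + 1) →
      ∃ k, 1 ≤ k ∧ k ≤ x.length ∧ Sat (x ++ [c]) φ k)
    (ψ : PTL α) (hψ : ψ.pastDepth ≤ d) :
    Models (x ++ [c]) ψ ↔ Models x ψ := by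
  simp only [Models, List.length_append, List.length_singleton]
  induction ψ with
  | atom b => simp [Sat]
  | conj φ χ ihφ ihχ =>
    simp only [pastDepth, max_le_iff] at hψ
    simp only [Sat, ihφ hψ.1, ihχ hψ.2]
  | neg φ ih => simp only [Sat, ih hψ]
  | past φ =>
    simp only [pastDepth] at hψ
    simp only [Sat]
    constructor
    · rintro ⟨m, h1, h2, h3⟩
      obtain ⟨k, hk1, hkx, hk⟩ : ∃ k, 1 ≤ k ∧ k ≤ x.length ∧ Sat (x ++ [c]) φ k := by
        rcases Nat.lt_succ_iff_lt_or_eq.1 h2 with h2 | rfl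
        · exact ⟨m, h1, by omega, h3⟩
        · exact hc φ (by omega) h3
      exact ⟨k, hk1, by omega, (sat_append_iff_of_le φ hkx).1 hk⟩
    · rintro ⟨m, h1, h2, h3⟩
      exact ⟨m, h1, by omega, (sat_append_iff_of_le φ (by omega)).2 h3⟩

theorem models_alternatingWord_add_two_iff (a b : α) (ψ : PTL α) {n : ℕ}
    (hn : 2 * ψ.pastDepth + 1 ≤ n) :
    Models (alternatingWord a b (n + 2)) ψ ↔ Models (alternatingWord a b (n + 1)) ψ := by
  rw [alternatingWord_succ a b (n + 1)]
  refine models_append_singleton_iff (fun φ hφ h => ⟨n, by omega, by simp, ?_⟩) ψ le_rfl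
  rw [← alternatingWord_succ] at h ⊢
  rw [length_alternatingWord] at h
  exact (sat_add_period_iff (fun _ => getElem?_alternatingWord_add_two a b) φ (by omega)
    (by simp)).1 h

/-- PTL has no constant `⊤`; this tautology stands in for it. -/
def top (c : α) : PTL α := .neg (.conj (.atom c) (.neg (.atom c)))

def initial (c : α) : PTL α := .neg (.past (top c))

def startsWith (c : α) : PTL α := .past (.conj (.atom c) (initial c))

theorem sat_initial_iff {w : List α} {c : α} {m : ℕ} : Sat w (initial c) m ↔ m ≤ 1 := by
  simp only [initial, top, Sat]
  constructor
  · intro h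
    by_contra! hm
    exact h ⟨1, le_rfl, hm, fun h => h.2 h.1⟩
  · rintro hm ⟨m', h1, h2, -⟩
    omega

theorem models_startsWith_iff {w : List α} {c : α} :
    Models w (startsWith c) ↔ ∃ u, w = c :: u := by
  simp only [Models, startsWith, Sat, sat_initial_iff]
  constructor
  · rintro ⟨m, h1, -, ⟨-, hc⟩, hm⟩
    obtain rfl : m = 1 := by omega
    exact List.head?_eq_some_iff.1 (by rwa [List.head?_eq_getElem?])
  · rintro ⟨u, rfl⟩
    exact ⟨1, le_rfl, by simp, ⟨le_rfl, rfl⟩, le_rfl⟩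

end PTL

open PTL in
theorem last_not_ptl_first_ptl_general {α : Type*} (a b : α) (hab : a ≠ b) :
    ¬ PTLDefinable {w : List α | ∃ u : List α, w = u ++ [b]} ∧
      PTLDefinable {w : List α | ∃ u : List α, w = b :: u} := by
  refine ⟨?_, ⟨startsWith b, fun w => models_startsWith_iff.symm⟩⟩
  rintro ⟨ψ, hψ⟩
  set n := 2 * ψ.pastDepth + 1 with hn
  have hx : alternatingWord a b (n + 1) ∈ {w : List α | ∃ u, w = u ++ [b]} :=
    ⟨alternatingWord a b n, by simp [alternatingWord_succ, hn]⟩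
  have hy : alternatingWord a b (n + 2) ∉ {w : List α | ∃ u, w = u ++ [b]} := by
    rintro ⟨u, hu⟩
    rw [alternatingWord_succ a b (n + 1), if_pos (by omega)] at hu
    exact hab (List.singleton_inj.1 (List.append_inj' hu rfl).2)
  exact hy ((hψ _).2 ((models_alternatingWord_add_two_iff a b ψ hn.ge).2 ((hψ _).1 hx)))

/-- The language `Σ*b` of strings ending with `b` is not PTL-definable,
whereas the language `bΣ*` of strings beginning with `b` is PTL-definable. -/
theorem last_not_ptl_first_ptl {α : Type*} [Fintype α] (a b : α) (hab : a ≠ b) :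
    ¬ PTLDefinable {w : List α | ∃ u : List α, w = u ++ [b]} ∧
      PTLDefinable {w : List α | ∃ u : List α, w = b :: u} :=
  last_not_ptl_first_ptl_general a b hab
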